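/- Let γ > 0, and set Q(z) = e^{-1/z}·z/(1−z) and K(z) = (1/γ)·e^{1/z}·(2 − 2/z + 1/z²). For every 0 < b < 1, ∫_ε^b Q(z)K(z) dz → +∞ as ε → 0⁺, and for every 0 < a < 1, ∫_a^v Q(z)K(z) dz → +∞ as v → 1⁻; i.e., Q·K is integrable on no neighborhood of 0 or of 1 inside (0,1). -/

import Mathlib

/-!
On `(0, 1)` the exponentials cancel and `Q z * K z = (1/γ) (1/z + 1/(1 - z) - 2)`, with
antiderivative `(1/γ) (log z - log (1 - z) - 2 z)`, which tends to `-∞` at `0⁺` and to `+∞`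
at `1⁻`. An integrable function has a continuous primitive up to the endpoint, so `Q K` is
integrable near neither endpoint.
-/

open MeasureTheory

noncomputable def Qhet (z : ℝ) : ℝ := Real.exp (-1 / z) * z / (1 - z)

noncomputable def Khet (γ z : ℝ) : ℝ :=
  (1 / γ) * Real.exp (1 / z) * (2 - 2 / z + 1 / z ^ 2)

open Filter Topology Set Real

theorem not_integrableOn_Ioo_of_tendsto_integral_nhdsGT {f : ℝ → ℝ} {a b : ℝ} (hab : a < b)
    (h : Tendsto (fun x => ∫ t in x..b, f t) (𝓝[>] a) atTop) : ¬ IntegrableOn f (Ioo a b) := by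
  intro hf
  have hcont : ContinuousWithinAt (fun x => ∫ t in x..b, f t) (Ioi a) a := by
    rw [← integrableOn_Icc_iff_integrableOn_Ioo, ← uIcc_of_le hab.le] at hf
    exact (intervalIntegral.continuousOn_primitive_interval_left hf a left_mem_uIcc
      ).mono_of_mem_nhdsWithin (by rw [uIcc_of_le hab.le]; exact Icc_mem_nhdsGT hab)
  exact not_tendsto_atTop_of_tendsto_nhds hcont.tendsto h

theorem not_integrableOn_Ioo_of_tendsto_integral_nhdsLT {f : ℝ → ℝ} {a b : ℝ} (hab : a < b)
    (h : Tendsto (fun x => ∫ t in a..x, f t) (𝓝[<] b) atTop) : ¬ IntegrableOn f (Ioo a b) := by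
  intro hf
  have hcont : ContinuousWithinAt (fun x => ∫ t in a..x, f t) (Iio b) b := by
    rw [← integrableOn_Icc_iff_integrableOn_Ioo, ← uIcc_of_le hab.le] at hf
    exact (intervalIntegral.continuousOn_primitive_interval hf b right_mem_uIcc
      ).mono_of_mem_nhdsWithin (by rw [uIcc_of_le hab.le]; exact Icc_mem_nhdsLT hab)
  exact not_tendsto_atTop_of_tendsto_nhds hcont.tendsto h

theorem Qhet_mul_Khet (γ : ℝ) {z : ℝ} (hz₀ : z ≠ 0) (hz₁ : z ≠ 1) :
    Qhet z * Khet γ z = (1 / γ) * (-2 + 1 / z + 1 / (1 - z)) := by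
  have h1z : 1 - z ≠ 0 := sub_ne_zero.2 hz₁.symm
  unfold Qhet Khet
  rw [neg_div, exp_neg]
  field_simp
  ring

noncomputable def hetPotential (γ z : ℝ) : ℝ := (1 / γ) * (-2 * z + log z - log (1 - z))

theorem hasDerivAt_hetPotential (γ : ℝ) {z : ℝ} (hz₀ : z ≠ 0) (hz₁ : z ≠ 1) :
    HasDerivAt (hetPotential γ) ((1 / γ) * (-2 + 1 / z + 1 / (1 - z))) z := by
  have h1z : 1 - z ≠ 0 := sub_ne_zero.2 hz₁.symm
  have h := ((((hasDerivAt_id z).const_mul (-2)).add (hasDerivAt_log hz₀)).sub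
    ((hasDerivAt_log h1z).comp z ((hasDerivAt_id z).const_sub 1))).const_mul (1 / γ)
  exact h.congr_deriv (by field_simp; ring)

theorem integral_Qhet_mul_Khet (γ : ℝ) {u v : ℝ} (hu : u ∈ Ioo (0 : ℝ) 1)
    (hv : v ∈ Ioo (0 : ℝ) 1) :
    ∫ z in u..v, Qhet z * Khet γ z = hetPotential γ v - hetPotential γ u := by
  have hz : ∀ z ∈ uIcc u v, z ≠ 0 ∧ z ≠ 1 := fun z hz =>
    have h := ordConnected_Ioo.uIcc_subset hu hv hz
    ⟨h.1.ne', h.2.ne⟩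
  rw [intervalIntegral.integral_congr fun z hz' => Qhet_mul_Khet γ (hz z hz').1 (hz z hz').2]
  refine intervalIntegral.integral_eq_sub_of_hasDerivAt
    (fun z hz' => hasDerivAt_hetPotential γ (hz z hz').1 (hz z hz').2) ?_
  refine ContinuousOn.intervalIntegrable (continuousOn_of_forall_continuousAt fun z hz' => ?_)
  have : z ≠ 0 ∧ 1 - z ≠ 0 := ⟨(hz z hz').1, sub_ne_zero.2 (hz z hz').2.symm⟩
  fun_prop (disch := simp [this])

theorem tendsto_hetPotential_nhdsGT_zero {γ : ℝ} (hγ : 0 < γ) :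
    Tendsto (hetPotential γ) (𝓝[>] 0) atBot := by
  have hrest : Tendsto (fun z => -2 * z - log (1 - z)) (𝓝[>] 0) (𝓝 0) := by
    have : ContinuousAt (fun z : ℝ => -2 * z - log (1 - z)) 0 :=
      (continuousAt_const.mul continuousAt_id).sub
        ((continuousAt_log (by norm_num)).comp (continuousAt_const.sub continuousAt_id))
    simpa using this.tendsto.mono_left nhdsWithin_le_nhds
  refine ((hrest.add_atBot tendsto_log_nhdsGT_zero).const_mul_atBot
    (show (0 : ℝ) < 1 / γ by positivity)).congr fun z => ?_
  unfold hetPotential; ring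

theorem tendsto_one_sub_nhdsLT_one : Tendsto (fun z : ℝ => 1 - z) (𝓝[<] 1) (𝓝[>] 0) := by
  simpa using (continuous_sub_left (1 : ℝ)).continuousWithinAt.tendsto_nhdsWithin
    (s := Iio 1) (t := Ioi 0) (x := 1) fun _ hz => sub_pos.2 hz

theorem tendsto_hetPotential_nhdsLT_one {γ : ℝ} (hγ : 0 < γ) :
    Tendsto (hetPotential γ) (𝓝[<] 1) atTop := by
  have hrest : Tendsto (fun z => -2 * z + log z) (𝓝[<] 1) (𝓝 (-2)) := by
    have : ContinuousAt (fun z : ℝ => -2 * z + log z) 1 :=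
      (continuousAt_const.mul continuousAt_id).add (continuousAt_log (by norm_num))
    simpa using this.tendsto.mono_left nhdsWithin_le_nhds
  have hlog : Tendsto (fun z => -log (1 - z)) (𝓝[<] 1) atTop :=
    tendsto_neg_atBot_atTop.comp (tendsto_log_nhdsGT_zero.comp tendsto_one_sub_nhdsLT_one)
  refine ((hrest.add_atTop hlog).const_mul_atTop
    (show (0 : ℝ) < 1 / γ by positivity)).congr fun z => ?_
  unfold hetPotential; ring

/-- For heterodyne detection, R(0,b) = ∞ and R(a,1) = ∞: the integral of Q·K
diverges both at 0 and at 1, i.e. Q·K is integrable on no neighborhood of 0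
or 1 inside (0,1). -/
theorem het_QK_diverges (γ : ℝ) (hγ : 0 < γ) :
    (∀ b : ℝ, 0 < b → b < 1 →
      Filter.Tendsto (fun ε => ∫ z in ε..b, Qhet z * Khet γ z)
        (nhdsWithin 0 (Set.Ioi 0)) Filter.atTop ∧
      ¬ IntegrableOn (fun z => Qhet z * Khet γ z) (Set.Ioo 0 b)) ∧
    (∀ a : ℝ, 0 < a → a < 1 →
      Filter.Tendsto (fun v => ∫ z in a..v, Qhet z * Khet γ z)
        (nhdsWithin 1 (Set.Iio 1)) Filter.atTop ∧
      ¬ IntegrableOn (fun z => Qhet z * Khet γ z) (Set.Ioo a 1)) := by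
  refine ⟨fun b hb₀ hb₁ => ?_, fun a ha₀ ha₁ => ?_⟩
  · have h : Tendsto (fun ε => ∫ z in ε..b, Qhet z * Khet γ z) (𝓝[>] 0) atTop := by
      refine (tendsto_atTop_add_const_left _ (hetPotential γ b)
        (tendsto_neg_atBot_atTop.comp (tendsto_hetPotential_nhdsGT_zero hγ))).congr' ?_
      filter_upwards [Ioo_mem_nhdsGT hb₀] with ε hε
      rw [integral_Qhet_mul_Khet γ ⟨hε.1, hε.2.trans hb₁⟩ ⟨hb₀, hb₁⟩]
      exact sub_eq_add_neg _ _
    exact ⟨h, not_integrableOn_Ioo_of_tendsto_integral_nhdsGT hb₀ h⟩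
  · have h : Tendsto (fun v => ∫ z in a..v, Qhet z * Khet γ z) (𝓝[<] 1) atTop := by
      refine (tendsto_atTop_add_const_right _ (-hetPotential γ a)
        (tendsto_hetPotential_nhdsLT_one hγ)).congr' ?_
      filter_upwards [Ioo_mem_nhdsLT ha₁] with v hv
      rw [integral_Qhet_mul_Khet γ ⟨ha₀, ha₁⟩ ⟨ha₀.trans hv.1, hv.2⟩]
      ring
    exact ⟨h, not_integrableOn_Ioo_of_tendsto_integral_nhdsLT ha₁ h⟩
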